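/- (Failure of C¹ without the compatibility condition.) Let f₀ : ℝ² × ℝ² → ℝ be continuously differentiable on (closed unit disk) × ℝ², satisfying the specular boundary condition f₀(x,v) = f₀(x, R_x v) for all |x| = 1 and all v ∈ ℝ². Suppose there exists (x₀,v₀) ∈ γ₋ at which the compatibility condition fails, i.e. ∇_x f₀(x₀,v₀) ≠ ∇_x f₀(x₀, R_{x₀} v₀) R_{x₀} − 2 ∇_v f₀(x₀, R_{x₀} v₀) A_{v₀,x₀}. Define F(t,x,v) := f₀(x − t·v, v) if t ≤ t_b(x,v), and F(t,x,v) := f₀(x_b(x,v) − (t − t_b(x,v))·R_{x_b(x,v)} v, R_{x_b(x,v)} v) if t > t_b(x,v). Then for every t with 0 < t < 2|v₀·x₀|/|v₀|², setting x := x₀ + t·v₀ (which lies in the open unit disk, with t_b(x,v₀) = t and x_b(x,v₀) = x₀), the function F is not differentiable at (t, x, v₀). -/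

import Mathlib

/-!
Along the backward characteristic, the state `(t, x₀ + t • v₀, v₀)` reaches the boundary at time
exactly `t`, at `x₀`. Perturb the position along `s ↦ x₀ + t • v₀ + s • h` with `s ≥ 0`. If
`⟪x₀, h⟫ < 0` the backward ray still stays in the disk up to time `t`, so `F = f₀ (x₀ + s • h, v₀)`;
if `⟪x₀, h⟫ > 0` it leaves the disk earlier and `F` is `f₀` at the post-bounce state. The exit time
is an explicit root of a quadratic, smooth at interior positions, and the post-bounce state has
derivative `(R h, -2 A h)` in `s`. So if `F` were differentiable, its `x`-derivative would agree
with `h ↦ ∇ₓf₀(x₀, v₀) h` on one open half-plane and with `h ↦ ∇f₀(x₀, R v₀) (R h, -2 A h)` on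
the other; linear maps that agree on a nonempty open set are equal, and their equality is the
compatibility condition.
-/

noncomputable section

open Matrix Real Set

/-- The Euclidean plane ℝ². -/
abbrev E : Type := EuclideanSpace ℝ (Fin 2)

/-- Dot product on ℝ². -/
def dot (a b : E) : ℝ := a 0 * b 0 + a 1 * b 1

/-- Build a vector of ℝ² from its components. -/
def toE (f : Fin 2 → ℝ) : E := (WithLp.equiv 2 (Fin 2 → ℝ)).symm f

/-- Tensor (outer) product a⊗b, (a⊗b)_{ij} = aᵢ bⱼ. -/
def outer (a b : E) : Matrix (Fin 2) (Fin 2) ℝ := Matrix.of fun i j => a i * b j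

/-- Matrix acting on a column vector. -/
def mulV (M : Matrix (Fin 2) (Fin 2) ℝ) (v : E) : E := toE fun i => M i 0 * v 0 + M i 1 * v 1

/-- Row vector multiplied by a matrix on the right. -/
def vMulM (w : E) (M : Matrix (Fin 2) (Fin 2) ℝ) : E := toE fun j => w 0 * M 0 j + w 1 * M 1 j

/-- Specular reflection matrix R_n = I - 2 n⊗n. -/
def Rmat (n : E) : Matrix (Fin 2) (Fin 2) ℝ := 1 - (2 : ℝ) • outer n n

/-- The matrix A_{v,n} = ((v·n) I + n⊗v)(I - (v⊗n)/(v·n)). -/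
def Amat (v n : E) : Matrix (Fin 2) (Fin 2) ℝ :=
  (dot v n • (1 : Matrix (Fin 2) (Fin 2) ℝ) + outer n v) *
    (1 - (dot v n)⁻¹ • outer v n)

/-- Counterclockwise rotation by π/2. -/
def Qmat : Matrix (Fin 2) (Fin 2) ℝ := !![0, -1; 1, 0]

/-- Backward exit time from the closed unit disk. -/
def tb (x v : E) : ℝ := sSup {s : ℝ | 0 ≤ s ∧ ‖x - s • v‖ ≤ 1}

/-- Backward exit point from the closed unit disk. -/
def xb (x v : E) : E := x - tb x v • v

/-- The i-th column of a 2×2 matrix, as a vector of ℝ². -/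
def colE (M : Matrix (Fin 2) (Fin 2) ℝ) (i : Fin 2) : E := toE fun k => M k i

/-- A 2×2 matrix as a continuous linear map ℝ² → ℝ². -/
def toCLM (M : Matrix (Fin 2) (Fin 2) ℝ) : E →L[ℝ] E :=
  LinearMap.toContinuousLinearMap (Matrix.toEuclideanLin M)

/-- The phase space (closed unit disk) × ℝ². -/
def S : Set (E × E) := {p : E × E | ‖p.1‖ ≤ 1}

/-- The gradient in x of f₀ within (closed unit disk) × ℝ², as a row vector. -/
def gradx (f : E × E → ℝ) (x v : E) : E :=
  toE fun i => fderivWithin ℝ f S (x, v) (EuclideanSpace.single i 1, 0)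

/-- The gradient in v of f₀ within (closed unit disk) × ℝ², as a row vector. -/
def gradv (f : E × E → ℝ) (x v : E) : E :=
  toE fun i => fderivWithin ℝ f S (x, v) (0, EuclideanSpace.single i 1)

/-- The one-bounce mild solution F(t,x,v). -/
def Ffun (f₀ : E × E → ℝ) (p : ℝ × E × E) : ℝ :=
  if p.1 ≤ tb p.2.1 p.2.2 then f₀ (p.2.1 - p.1 • p.2.2, p.2.2)
  else
    f₀ (xb p.2.1 p.2.2 - (p.1 - tb p.2.1 p.2.2) • mulV (Rmat (xb p.2.1 p.2.2)) p.2.2,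
        mulV (Rmat (xb p.2.1 p.2.2)) p.2.2)

open Filter Topology
open scoped RealInnerProductSpace

lemma mul_one_sub_norm_sq_nonneg {F : Type*} [NormedAddCommGroup F] {y : F} (hy : ‖y‖ ≤ 1)
    (v : F) : 0 ≤ ‖v‖ ^ 2 * (1 - ‖y‖ ^ 2) :=
  mul_nonneg (by positivity) (sub_nonneg.2 (sq_le_one_iff₀ (norm_nonneg y) |>.2 hy))

lemma mul_one_sub_norm_sq_pos {F : Type*} [NormedAddCommGroup F] {y v : F} (hy : ‖y‖ < 1)
    (hv : v ≠ 0) : 0 < ‖v‖ ^ 2 * (1 - ‖y‖ ^ 2) :=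
  mul_pos (by positivity) (sub_pos.2 (sq_lt_one_iff₀ (norm_nonneg y) |>.2 hy))

section NormedSpace

variable {F : Type*} [NormedAddCommGroup F] [NormedSpace ℝ F]

lemma hasDerivAt_add_smul (y h : F) {s₀ : ℝ} : HasDerivAt (fun s : ℝ => y + s • h) h s₀ := by
  simpa using ((hasDerivAt_id s₀).smul_const h).const_add y

lemma eventually_norm_add_smul_lt_one {y : F} (hy : ‖y‖ < 1) (h : F) :
    ∀ᶠ s in 𝓝 (0 : ℝ), ‖y + s • h‖ < 1 :=
  (continuous_norm.comp (continuous_const.add (continuous_id.smul continuous_const))).continuousAt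
    |>.eventually_lt continuousAt_const (by simpa using hy)

end NormedSpace

section UnitBall

variable {F : Type*} [NormedAddCommGroup F] [InnerProductSpace ℝ F]

lemma norm_add_smul_sq (y h : F) (s : ℝ) :
    ‖y + s • h‖ ^ 2 = ‖y‖ ^ 2 + 2 * s * ⟪y, h⟫ + s ^ 2 * ‖h‖ ^ 2 := by
  rw [norm_add_sq_real, inner_smul_right, norm_smul, mul_pow, Real.norm_eq_abs, sq_abs]
  ring

lemma norm_sub_smul_sq (y h : F) (s : ℝ) :
    ‖y - s • h‖ ^ 2 = ‖y‖ ^ 2 - 2 * s * ⟪y, h⟫ + s ^ 2 * ‖h‖ ^ 2 := by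
  rw [sub_eq_add_neg, ← neg_smul, norm_add_smul_sq]
  ring

lemma norm_add_smul_lt_one {z v : F} {t : ℝ} (hz : ‖z‖ = 1) (ht : 0 < t)
    (htv : t * ‖v‖ ^ 2 < -2 * ⟪z, v⟫) : ‖z + t • v‖ < 1 := by
  rw [← sq_lt_one_iff₀ (norm_nonneg _), norm_add_smul_sq, hz]
  nlinarith

lemma eventually_norm_add_smul_le {y h : F} (hh : ⟪y, h⟫ < 0) :
    ∀ᶠ s in 𝓝[≥] (0 : ℝ), ‖y + s • h‖ ≤ ‖y‖ := by
  have hcont : ContinuousAt (fun s : ℝ => 2 * ⟪y, h⟫ + s * ‖h‖ ^ 2) 0 := by fun_prop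
  have hneg : ∀ᶠ s in 𝓝 (0 : ℝ), 2 * ⟪y, h⟫ + s * ‖h‖ ^ 2 < 0 :=
    hcont.eventually_lt continuousAt_const (by simp; linarith)
  filter_upwards [nhdsWithin_le_nhds hneg, self_mem_nhdsWithin] with s hs (hs0 : 0 ≤ s)
  rw [← sq_le_sq₀ (norm_nonneg _) (norm_nonneg _), norm_add_smul_sq]
  nlinarith

lemma norm_lt_norm_add_smul {y h : F} {s : ℝ} (hh : 0 < ⟪y, h⟫) (hs : 0 < s) :
    ‖y‖ < ‖y + s • h‖ := by
  rw [← sq_lt_sq₀ (norm_nonneg _) (norm_nonneg _), norm_add_smul_sq]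
  nlinarith [sq_nonneg (s * ‖h‖)]

lemma norm_sub_smul_reflection_le_one {z v : F} {u : ℝ} (hz : ‖z‖ = 1) (hu : 0 ≤ u)
    (h : 2 * ⟪z, v⟫ + u * ‖v‖ ^ 2 ≤ 0) :
    ‖z - u • (v - (2 * ⟪z, v⟫) • z)‖ ≤ 1 := by
  have hw : ‖v - (2 * ⟪z, v⟫) • z‖ = ‖v‖ := by
    rw [← sq_eq_sq₀ (norm_nonneg _) (norm_nonneg _), norm_sub_smul_sq, hz, real_inner_comm]
    ring
  rw [← sq_le_one_iff₀ (norm_nonneg _), norm_sub_smul_sq, hw, hz, inner_sub_right,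
    inner_smul_right, real_inner_self_eq_norm_sq, hz]
  nlinarith

/-- The larger root `s` of `‖y - s • v‖ = 1`. -/
def exitRoot (y v : F) : ℝ :=
  (⟪y, v⟫ + √(⟪y, v⟫ ^ 2 + ‖v‖ ^ 2 * (1 - ‖y‖ ^ 2))) / ‖v‖ ^ 2

variable {y v : F}

lemma setOf_norm_sub_smul_le_one (hy : ‖y‖ ≤ 1) (hv : v ≠ 0) :
    {s : ℝ | 0 ≤ s ∧ ‖y - s • v‖ ≤ 1} = Icc 0 (exitRoot y v) := by
  have hV : 0 < ‖v‖ ^ 2 := by positivity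
  set p := ⟪y, v⟫
  have hy' := mul_one_sub_norm_sq_nonneg hy v
  have hD : 0 ≤ p ^ 2 + ‖v‖ ^ 2 * (1 - ‖y‖ ^ 2) := by positivity
  set r := √(p ^ 2 + ‖v‖ ^ 2 * (1 - ‖y‖ ^ 2))
  have hr : r ^ 2 = p ^ 2 + ‖v‖ ^ 2 * (1 - ‖y‖ ^ 2) := Real.sq_sqrt hD
  have hpr : |p| ≤ r := Real.abs_le_sqrt (by linarith)
  obtain ⟨hpr₁, hpr₂⟩ := abs_le.mp hpr
  ext s
  simp only [mem_ofPred_eq, mem_Icc, exitRoot]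
  rw [← sq_le_one_iff₀ (norm_nonneg _), norm_sub_smul_sq, le_div_iff₀ hV]
  refine and_congr_right fun hs => ⟨fun h => ?_, fun h => ?_⟩
  · by_contra! hlt
    nlinarith
  · have : (s * ‖v‖ ^ 2 - p) ^ 2 ≤ r ^ 2 := by
      nlinarith [mul_nonneg hs hV.le]
    nlinarith

lemma inner_sub_exitRoot_smul (hv : v ≠ 0) :
    ⟪y - exitRoot y v • v, v⟫ = -√(⟪y, v⟫ ^ 2 + ‖v‖ ^ 2 * (1 - ‖y‖ ^ 2)) := by
  have hV : ‖v‖ ^ 2 ≠ 0 := by positivity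
  rw [inner_sub_left, inner_smul_left, real_inner_self_eq_norm_sq, exitRoot, RCLike.conj_to_real,
    div_mul_cancel₀ _ hV]
  ring

lemma norm_sub_exitRoot_smul (hy : ‖y‖ ≤ 1) (hv : v ≠ 0) : ‖y - exitRoot y v • v‖ = 1 := by
  have hV : ‖v‖ ^ 2 ≠ 0 := by positivity
  have hD : 0 ≤ ⟪y, v⟫ ^ 2 + ‖v‖ ^ 2 * (1 - ‖y‖ ^ 2) := by
    have := mul_one_sub_norm_sq_nonneg hy v
    positivity
  rw [← pow_eq_one_iff_of_nonneg (norm_nonneg _) two_ne_zero, norm_sub_smul_sq, exitRoot]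
  field_simp
  linear_combination Real.sq_sqrt hD

lemma exitRoot_add_smul {z : F} (hz : ‖z‖ = 1) (hzv : ⟪z, v⟫ ≤ 0) (hv : v ≠ 0) (t : ℝ) :
    exitRoot (z + t • v) v = t := by
  have hV : ‖v‖ ^ 2 ≠ 0 := by positivity
  have hD : ⟪z + t • v, v⟫ ^ 2 + ‖v‖ ^ 2 * (1 - ‖z + t • v‖ ^ 2) = ⟪z, v⟫ ^ 2 := by
    rw [norm_add_smul_sq, inner_add_left, inner_smul_left, real_inner_self_eq_norm_sq, hz,
      RCLike.conj_to_real]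
    ring
  rw [exitRoot, hD, Real.sqrt_sq_eq_abs, abs_of_nonpos hzv, inner_add_left, inner_smul_left,
    real_inner_self_eq_norm_sq, RCLike.conj_to_real]
  field_simp
  ring

lemma hasDerivAt_exitRoot_line (hy : ‖y‖ < 1) (hv : v ≠ 0) (h : F) :
    HasDerivAt (fun s : ℝ => exitRoot (y + s • h) v)
      (⟪y - exitRoot y v • v, h⟫ / ⟪y - exitRoot y v • v, v⟫) 0 := by
  have hV : 0 < ‖v‖ ^ 2 := by positivity
  have hD : 0 < ⟪y, v⟫ ^ 2 + ‖v‖ ^ 2 * (1 - ‖y‖ ^ 2) := by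
    have := mul_one_sub_norm_sq_pos hy hv
    positivity
  have hline := hasDerivAt_add_smul y h (s₀ := 0)
  have hp : HasDerivAt (fun s : ℝ => ⟪y + s • h, v⟫) ⟪h, v⟫ 0 := by
    simpa using hline.inner ℝ (hasDerivAt_const (0 : ℝ) v)
  have hsq : HasDerivAt (fun s : ℝ => ⟪y + s • h, v⟫ ^ 2) (2 * ⟪y, v⟫ * ⟪h, v⟫) 0 := by
    simpa using hp.fun_pow 2
  have hn : HasDerivAt (fun s : ℝ => ‖v‖ ^ 2 * (1 - ‖y + s • h‖ ^ 2))
      (‖v‖ ^ 2 * -(2 * ⟪y, h⟫)) 0 := by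
    simpa using (hline.norm_sq.const_sub 1).const_mul (‖v‖ ^ 2)
  have hroot := (hp.add ((hsq.add hn).sqrt (by simpa using hD.ne'))).div_const (‖v‖ ^ 2)
  refine hroot.congr_deriv ?_
  rw [inner_sub_exitRoot_smul hv, inner_sub_left, inner_smul_left, exitRoot, RCLike.conj_to_real]
  simp only [Pi.add_apply, zero_smul, add_zero, real_inner_comm h v]
  have hr : √(⟪y, v⟫ ^ 2 + ‖v‖ ^ 2 * (1 - ‖y‖ ^ 2)) ≠ 0 := (Real.sqrt_pos.2 hD).ne'
  generalize √(⟪y, v⟫ ^ 2 + ‖v‖ ^ 2 * (1 - ‖y‖ ^ 2)) = r at hr ⊢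
  field_simp
  ring

end UnitBall

section Calculus

lemma ContinuousLinearMap.eq_of_eqOn_isOpen {𝕜 M N : Type*} [NontriviallyNormedField 𝕜]
    [NormedAddCommGroup M] [NormedSpace 𝕜 M] [NormedAddCommGroup N] [NormedSpace 𝕜 N]
    {f g : M →L[𝕜] N} {U : Set M} (hU : IsOpen U) (hne : U.Nonempty) (h : EqOn f g U) :
    f = g := by
  have htop : LinearMap.eqLocus (f : M →ₗ[𝕜] N) g = ⊤ :=
    Submodule.eq_top_of_nonempty_interior' _ <|
      hne.mono (interior_maximal (fun _ hx => h hx) hU)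
  exact ContinuousLinearMap.coe_injective (LinearMap.eqLocus_eq_top.1 htop)

variable {P Q G : Type*} [NormedAddCommGroup P] [NormedSpace ℝ P] [NormedAddCommGroup Q]
  [NormedSpace ℝ Q] [NormedAddCommGroup G] [NormedSpace ℝ G]

lemma HasFDerivAt.apply_eq_of_eventuallyEq_Ici {F : P → G} {L : P →L[ℝ] G} {p : P} {γ : ℝ → P}
    {γ' : P} (hF : HasFDerivAt F L p) (hγ : HasDerivAt γ γ' 0) (hγ0 : γ 0 = p) {f : Q → G}
    {D : Q →L[ℝ] G} {S : Set Q} {q : Q} {Γ : ℝ → Q} {Γ' : Q} (hf : HasFDerivWithinAt f D S q)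
    (hΓ : HasDerivAt Γ Γ' 0) (hΓ0 : Γ 0 = q) (hΓS : ∀ᶠ s in 𝓝[≥] 0, Γ s ∈ S)
    (heq : ∀ᶠ s in 𝓝[≥] 0, F (γ s) = f (Γ s)) : L γ' = D Γ' := by
  subst hγ0 hΓ0
  have hleft : HasDerivWithinAt (F ∘ γ) (L γ') (Ici 0) 0 :=
    (hF.comp_hasDerivAt 0 hγ).hasDerivWithinAt
  have hright : HasDerivWithinAt (f ∘ Γ) (D Γ') (Ici 0) 0 :=
    (hasDerivWithinAt_inter' hΓS).1 <|
      hf.comp_hasDerivWithinAt 0 hΓ.hasDerivWithinAt fun _ hs => hs.2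
  exact (uniqueDiffWithinAt_Ici 0).eq_deriv _ hleft <|
    hright.congr_of_eventuallyEq heq (heq.self_of_nhdsWithin self_mem_Ici)

end Calculus

lemma dot_eq_inner (a b : E) : dot a b = ⟪a, b⟫ := by
  simp [dot, PiLp.inner_apply, Fin.sum_univ_two]
  ring

lemma mulV_Rmat (n v : E) : mulV (Rmat n) v = v - (2 * ⟪n, v⟫) • n := by
  rw [← dot_eq_inner]
  ext i
  fin_cases i <;> simp [mulV, Rmat, outer, toE, dot, Matrix.one_apply] <;> ring

lemma mulV_Amat (v n h : E) :
    mulV (Amat v n) h = ⟪v, n⟫ • (h - (⟪n, h⟫ / ⟪v, n⟫) • v) +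
      ⟪v, h - (⟪n, h⟫ / ⟪v, n⟫) • v⟫ • n := by
  simp only [← dot_eq_inner]
  ext i
  fin_cases i <;>
    simp [mulV, Amat, outer, toE, dot, Matrix.mul_apply, Fin.sum_univ_two, Matrix.one_apply] <;>
    ring

lemma toCLM_apply (M : Matrix (Fin 2) (Fin 2) ℝ) (v : E) : toCLM M v = mulV M v := by
  ext i
  fin_cases i <;>
    simp [toCLM, mulV, toE, Matrix.toEuclideanLin, Matrix.mulVec, dotProduct, Fin.sum_univ_two]

section ExitTime

lemma tb_nonneg (y v : E) : 0 ≤ tb y v :=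
  Real.sSup_nonneg fun _ hs => hs.1

lemma add_smul_sub_tb_smul (y v h : E) (s : ℝ) : y + s • h - tb y v • v = xb y v + s • h := by
  rw [xb]
  abel

variable {y v : E}

lemma tb_eq_exitRoot (hy : ‖y‖ ≤ 1) (hv : v ≠ 0) : tb y v = exitRoot y v := by
  have hset := setOf_norm_sub_smul_le_one hy hv
  have h0 : (0 : ℝ) ∈ Icc 0 (exitRoot y v) := hset ▸ ⟨le_rfl, by simpa using hy⟩
  rw [tb, hset, csSup_Icc h0.2]

lemma xb_eq_sub_exitRoot (hy : ‖y‖ ≤ 1) (hv : v ≠ 0) : xb y v = y - exitRoot y v • v := by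
  rw [xb, tb_eq_exitRoot hy hv]

lemma le_tb_iff {t : ℝ} (hy : ‖y‖ ≤ 1) (hv : v ≠ 0) (ht : 0 ≤ t) :
    t ≤ tb y v ↔ ‖y - t • v‖ ≤ 1 := by
  have := congrArg (t ∈ ·) (setOf_norm_sub_smul_le_one hy hv)
  simp only [mem_ofPred_eq, mem_Icc, eq_iff_iff] at this
  rw [tb_eq_exitRoot hy hv]
  tauto

lemma norm_xb (hy : ‖y‖ ≤ 1) (hv : v ≠ 0) : ‖xb y v‖ = 1 := by
  rw [xb_eq_sub_exitRoot hy hv, norm_sub_exitRoot_smul hy hv]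

lemma inner_xb_neg (hy : ‖y‖ < 1) (hv : v ≠ 0) : ⟪xb y v, v⟫ < 0 := by
  rw [xb_eq_sub_exitRoot hy.le hv, inner_sub_exitRoot_smul hv, neg_neg_iff_pos, Real.sqrt_pos]
  have := mul_one_sub_norm_sq_pos hy hv
  positivity

lemma tb_add_smul {z : E} {t : ℝ} (hz : ‖z‖ = 1) (hzv : ⟪z, v⟫ ≤ 0) (hv : v ≠ 0)
    (hzt : ‖z + t • v‖ ≤ 1) : tb (z + t • v) v = t := by
  rw [tb_eq_exitRoot hzt hv, exitRoot_add_smul hz hzv hv]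

lemma xb_add_smul {z : E} {t : ℝ} (hz : ‖z‖ = 1) (hzv : ⟪z, v⟫ ≤ 0) (hv : v ≠ 0)
    (hzt : ‖z + t • v‖ ≤ 1) : xb (z + t • v) v = z := by
  rw [xb, tb_add_smul hz hzv hv hzt, add_sub_cancel_right]

lemma hasDerivAt_tb_line (hy : ‖y‖ < 1) (hv : v ≠ 0) (h : E) :
    HasDerivAt (fun s : ℝ => tb (y + s • h) v) (⟪xb y v, h⟫ / ⟪xb y v, v⟫) 0 := by
  rw [xb_eq_sub_exitRoot hy.le hv]
  refine (hasDerivAt_exitRoot_line hy hv h).congr_of_eventuallyEq ?_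
  filter_upwards [eventually_norm_add_smul_lt_one hy h] with s hs
  exact tb_eq_exitRoot hs.le hv

lemma hasDerivAt_xb_line (hy : ‖y‖ < 1) (hv : v ≠ 0) (h : E) :
    HasDerivAt (fun s : ℝ => xb (y + s • h) v)
      (h - (⟪xb y v, h⟫ / ⟪xb y v, v⟫) • v) 0 :=
  (hasDerivAt_add_smul y h).sub ((hasDerivAt_tb_line hy hv h).smul_const v)

lemma hasDerivAt_bounce_line (hy : ‖y‖ < 1) (hv : v ≠ 0) (h : E) :
    HasDerivAt (fun s : ℝ => (xb (y + s • h) v - (tb y v - tb (y + s • h) v) •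
        mulV (Rmat (xb (y + s • h) v)) v, mulV (Rmat (xb (y + s • h) v)) v))
      (mulV (Rmat (xb y v)) h, (-2 : ℝ) • mulV (Amat v (xb y v)) h) 0 := by
  set n := xb y v
  have hnv : ⟪n, v⟫ ≠ 0 := (inner_xb_neg hy hv).ne
  have hψ := hasDerivAt_xb_line hy hv h
  have hτ := hasDerivAt_tb_line hy hv h
  have hw : HasDerivAt (fun s : ℝ => mulV (Rmat (xb (y + s • h) v)) v)
      ((-2 : ℝ) • mulV (Amat v n) h) 0 := by
    simp only [mulV_Rmat]
    have hc := (hψ.inner ℝ (hasDerivAt_const (0 : ℝ) v)).const_mul 2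
    refine ((hc.smul hψ).const_sub v).congr_deriv ?_
    simp only [zero_smul, add_zero, inner_zero_right, zero_add, mulV_Amat, real_inner_comm v]
    module
  refine HasDerivAt.prodMk ?_ hw
  refine (hψ.sub ((hτ.const_sub (tb y v)).smul hw)).congr_deriv ?_
  have hm : ⟪n, h⟫ / ⟪n, v⟫ * ⟪n, v⟫ = ⟪n, h⟫ := div_mul_cancel₀ _ hnv
  simp only [zero_smul, add_zero, sub_self, zero_add, mulV_Rmat]
  linear_combination (norm := module) (-2 * hm) • n

end ExitTime

section MildSolution

variable {f₀ : E × E → ℝ} {L : ℝ × E × E →L[ℝ] ℝ} {y v h : E}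

lemma Ffun_of_le {t : ℝ} (ht : t ≤ tb y v) : Ffun f₀ (t, y, v) = f₀ (y - t • v, v) :=
  if_pos ht

lemma Ffun_of_lt {t : ℝ} (ht : tb y v < t) :
    Ffun f₀ (t, y, v) = f₀ (xb y v - (t - tb y v) • mulV (Rmat (xb y v)) v,
      mulV (Rmat (xb y v)) v) :=
  if_neg ht.not_ge

lemma hasDerivAt_spatial_line (t : ℝ) (y h v : E) :
    HasDerivAt (fun s : ℝ => (t, y + s • h, v)) ((0 : ℝ), h, (0 : E)) 0 :=
  (hasDerivAt_const _ t).prodMk ((hasDerivAt_add_smul y h).prodMk (hasDerivAt_const _ v))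

lemma HasFDerivAt.Ffun_apply_of_inner_xb_neg (hL : HasFDerivAt (Ffun f₀) L (tb y v, y, v))
    (hy : ‖y‖ < 1) (hv : v ≠ 0) (hf : DifferentiableWithinAt ℝ f₀ S (xb y v, v))
    (hh : ⟪xb y v, h⟫ < 0) : L (0, h, 0) = fderivWithin ℝ f₀ S (xb y v, v) (h, 0) := by
  have hin : ∀ᶠ s in 𝓝[≥] (0 : ℝ), ‖xb y v + s • h‖ ≤ 1 := by
    filter_upwards [eventually_norm_add_smul_le hh] with s hs
    exact hs.trans (norm_xb hy.le hv).le
  refine hL.apply_eq_of_eventuallyEq_Ici (hasDerivAt_spatial_line (tb y v) y h v) (by simp)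
    hf.hasFDerivWithinAt ((hasDerivAt_add_smul _ h).prodMk (hasDerivAt_const _ v)) (by simp)
    hin ?_
  filter_upwards [nhdsWithin_le_nhds (eventually_norm_add_smul_lt_one hy h), hin] with s hs hs'
  rw [Ffun_of_le, add_smul_sub_tb_smul]
  rwa [le_tb_iff hs.le hv (tb_nonneg y v), add_smul_sub_tb_smul]

lemma eventually_tb_add_smul_lt (hy : ‖y‖ < 1) (hv : v ≠ 0) (hh : 0 < ⟪xb y v, h⟫) :
    ∀ᶠ s in 𝓝 (0 : ℝ), 0 < s → tb (y + s • h) v < tb y v := by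
  filter_upwards [eventually_norm_add_smul_lt_one hy h] with s hs hs0
  rw [← not_le, le_tb_iff hs.le hv (tb_nonneg y v), add_smul_sub_tb_smul, not_le,
    ← norm_xb hy.le hv]
  exact norm_lt_norm_add_smul hh hs0

lemma HasFDerivAt.Ffun_apply_of_inner_xb_pos (hL : HasFDerivAt (Ffun f₀) L (tb y v, y, v))
    (hy : ‖y‖ < 1) (hv : v ≠ 0)
    (hf : DifferentiableWithinAt ℝ f₀ S (xb y v, mulV (Rmat (xb y v)) v))
    (hbc : f₀ (xb y v, v) = f₀ (xb y v, mulV (Rmat (xb y v)) v)) (hh : 0 < ⟪xb y v, h⟫) :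
    L (0, h, 0) = fderivWithin ℝ f₀ S (xb y v, mulV (Rmat (xb y v)) v)
      (mulV (Rmat (xb y v)) h, (-2 : ℝ) • mulV (Amat v (xb y v)) h) := by
  have hlt : ∀ᶠ s in 𝓝[≥] (0 : ℝ), 0 < s → tb (y + s • h) v < tb y v :=
    nhdsWithin_le_nhds (eventually_tb_add_smul_lt hy hv hh)
  have hcont : ContinuousAt (fun s : ℝ =>
      2 * ⟪xb (y + s • h) v, v⟫ + (tb y v - tb (y + s • h) v) * ‖v‖ ^ 2) 0 :=
    (continuousAt_const.mul ((hasDerivAt_xb_line hy hv h).continuousAt.inner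
      continuousAt_const)).add
      ((continuousAt_const.sub (hasDerivAt_tb_line hy hv h).continuousAt).mul continuousAt_const)
  have hincoming : ∀ᶠ s in 𝓝 (0 : ℝ),
      2 * ⟪xb (y + s • h) v, v⟫ + (tb y v - tb (y + s • h) v) * ‖v‖ ^ 2 < 0 :=
    hcont.eventually_lt continuousAt_const (by simp; linarith [inner_xb_neg hy hv])
  refine hL.apply_eq_of_eventuallyEq_Ici (hasDerivAt_spatial_line (tb y v) y h v) (by simp)
    hf.hasFDerivWithinAt (hasDerivAt_bounce_line hy hv h) (by simp) ?_ ?_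
  · filter_upwards [nhdsWithin_le_nhds (eventually_norm_add_smul_lt_one hy h), hlt,
      nhdsWithin_le_nhds hincoming, self_mem_nhdsWithin] with s hs hslt hs' (hs0 : 0 ≤ s)
    have hu : 0 ≤ tb y v - tb (y + s • h) v := by
      rcases hs0.eq_or_lt with rfl | hpos
      · simp
      · linarith [hslt hpos]
    show ‖_‖ ≤ 1
    rw [mulV_Rmat]
    exact norm_sub_smul_reflection_le_one (norm_xb hs.le hv) hu hs'.le
  · filter_upwards [hlt, self_mem_nhdsWithin] with s hslt (hs0 : 0 ≤ s)
    rcases hs0.eq_or_lt with rfl | hpos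
    · simpa [Ffun_of_le le_rfl, xb] using hbc
    · rw [Ffun_of_lt (hslt hpos)]

lemma HasFDerivAt.fderivWithin_compat_of_Ffun (hL : HasFDerivAt (Ffun f₀) L (tb y v, y, v))
    (hy : ‖y‖ < 1) (hv : v ≠ 0) (hf : DifferentiableWithinAt ℝ f₀ S (xb y v, v))
    (hf' : DifferentiableWithinAt ℝ f₀ S (xb y v, mulV (Rmat (xb y v)) v))
    (hbc : f₀ (xb y v, v) = f₀ (xb y v, mulV (Rmat (xb y v)) v)) :
    (fderivWithin ℝ f₀ S (xb y v, v)).comp (.inl ℝ E E) =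
      (fderivWithin ℝ f₀ S (xb y v, mulV (Rmat (xb y v)) v)).comp
        ((toCLM (Rmat (xb y v))).prod ((-2 : ℝ) • toCLM (Amat v (xb y v)))) := by
  set n := xb y v
  have hn : ‖n‖ = 1 := norm_xb hy.le hv
  let ℓ : E →L[ℝ] ℝ := L.comp ((0 : E →L[ℝ] ℝ).prod (.inl ℝ E E))
  have hcont : Continuous fun h : E => ⟪n, h⟫ := continuous_const.inner continuous_id
  have hin : ℓ = (fderivWithin ℝ f₀ S (n, v)).comp (.inl ℝ E E) :=
    ContinuousLinearMap.eq_of_eqOn_isOpen ((isOpen_Iio (a := (0 : ℝ))).preimage hcont)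
      ⟨-n, by simp [hn]⟩ fun h hh => by
        simpa [ℓ] using hL.Ffun_apply_of_inner_xb_neg hy hv hf hh
  have hout : ℓ = (fderivWithin ℝ f₀ S (n, mulV (Rmat n) v)).comp
      ((toCLM (Rmat n)).prod ((-2 : ℝ) • toCLM (Amat v n))) :=
    ContinuousLinearMap.eq_of_eqOn_isOpen ((isOpen_Ioi (a := (0 : ℝ))).preimage hcont)
      ⟨n, by simp [hn]⟩ fun h hh => by
        simpa [ℓ, toCLM_apply] using hL.Ffun_apply_of_inner_xb_pos hy hv hf' hbc hh
  rw [← hin, hout]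

end MildSolution

section Gradient

lemma ContinuousLinearMap.apply_mulV_single (ℓ : E →L[ℝ] ℝ) (M : Matrix (Fin 2) (Fin 2) ℝ)
    (j : Fin 2) :
    ℓ (mulV M (EuclideanSpace.single j 1)) =
      vMulM (toE fun i => ℓ (EuclideanSpace.single i 1)) M j := by
  have hM : mulV M (EuclideanSpace.single j 1) =
      M 0 j • EuclideanSpace.single 0 1 + M 1 j • EuclideanSpace.single 1 1 := by
    ext i
    fin_cases i <;> fin_cases j <;> simp [mulV, toE]
  rw [hM, map_add, map_smul, map_smul]
  simp [vMulM, toE]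
  ring

lemma gradx_eq_of_fderivWithin_comp {f : E × E → ℝ} {n v w : E}
    {R A : Matrix (Fin 2) (Fin 2) ℝ}
    (h : (fderivWithin ℝ f S (n, v)).comp (.inl ℝ E E) =
      (fderivWithin ℝ f S (n, w)).comp ((toCLM R).prod ((-2 : ℝ) • toCLM A))) :
    gradx f n v = vMulM (gradx f n w) R - (2 : ℝ) • vMulM (gradv f n w) A := by
  ext j
  set D := fderivWithin ℝ f S (n, w)
  have hj : fderivWithin ℝ f S (n, v) (EuclideanSpace.single j 1, 0) =
      D (mulV R (EuclideanSpace.single j 1), (-2 : ℝ) • mulV A (EuclideanSpace.single j 1)) := by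
    simpa [toCLM_apply] using congr($h (EuclideanSpace.single j 1))
  rw [← D.comp_inl_add_comp_inr, map_smul, ContinuousLinearMap.apply_mulV_single,
    ContinuousLinearMap.apply_mulV_single] at hj
  simpa [gradx, gradv, toE, D, sub_eq_add_neg] using hj

end Gradient

/-- failure of the compatibility condition at a point of γ₋ forces
    non-differentiability of the mild solution at the bounce. -/
theorem stmt19 (f₀ : E × E → ℝ)
    (hf : ContDiffOn ℝ 1 f₀ S)
    (hbc : ∀ x v : E, ‖x‖ = 1 → f₀ (x, v) = f₀ (x, mulV (Rmat x) v))
    (x₀ v₀ : E) (hx₀ : ‖x₀‖ = 1) (hv₀ : dot v₀ x₀ < 0)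
    (hfail : gradx f₀ x₀ v₀ ≠
      vMulM (gradx f₀ x₀ (mulV (Rmat x₀) v₀)) (Rmat x₀) -
        (2 : ℝ) • vMulM (gradv f₀ x₀ (mulV (Rmat x₀) v₀)) (Amat v₀ x₀)) :
    ∀ t : ℝ, 0 < t → t < 2 * |dot v₀ x₀| / ‖v₀‖ ^ 2 →
      ‖x₀ + t • v₀‖ < 1 ∧ tb (x₀ + t • v₀) v₀ = t ∧ xb (x₀ + t • v₀) v₀ = x₀ ∧
      ¬DifferentiableAt ℝ (Ffun f₀) (t, x₀ + t • v₀, v₀) := by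
  intro t ht htlt
  rw [dot_eq_inner, real_inner_comm] at hv₀ htlt
  have hv : v₀ ≠ 0 := by
    rintro rfl
    simp at hv₀
  rw [abs_of_neg hv₀, lt_div_iff₀ (by positivity)] at htlt
  have hx : ‖x₀ + t • v₀‖ < 1 := norm_add_smul_lt_one hx₀ ht (by linarith)
  have htb : tb (x₀ + t • v₀) v₀ = t := tb_add_smul hx₀ hv₀.le hv hx.le
  have hxb : xb (x₀ + t • v₀) v₀ = x₀ := xb_add_smul hx₀ hv₀.le hv hx.le
  refine ⟨hx, htb, hxb, fun hd => hfail ?_⟩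
  have hdiff : ∀ w : E, DifferentiableWithinAt ℝ f₀ S (x₀, w) := fun w =>
    hf.differentiableOn one_ne_zero _ hx₀.le
  have hL : HasFDerivAt (Ffun f₀) (fderiv ℝ (Ffun f₀) (t, x₀ + t • v₀, v₀))
      (tb (x₀ + t • v₀) v₀, x₀ + t • v₀, v₀) := by
    rw [htb]
    exact hd.hasFDerivAt
  have key := hL.fderivWithin_compat_of_Ffun hx hv
  rw [hxb] at key
  exact gradx_eq_of_fderivWithin_comp (key (hdiff _) (hdiff _) (hbc x₀ v₀ hx₀))
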